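/- With M_2 = (1/2) Σ_{i+j≥2, i,j≥1} q_i q_j (i+j-2) ∂/∂q_{i+j-2} + (1/2) Σ_{i,j≥1} q_{i+j+2} i j ∂²/(∂q_i ∂q_j) (where the term with i+j-2 = 0 is understood as absent) and Λ_1 = Σ_{i≥2} (i-1) q_i ∂/∂q_{i-1}, the operators commute: [M_2, Λ_1] = 0. -/

import Mathlib

open MvPolynomial

/-- Λ₁ = Σ_{i≥2} (i-1) q_i ∂/∂q_{i-1}, reindexed by i = j+1. -/
noncomputable def Lam1 (f : MvPolynomial ℕ ℚ) : MvPolynomial ℕ ℚ :=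
  ∑ᶠ j : ℕ, (j : ℚ) • (X (j + 1) * pderiv j f)

/-- M_a = ½ Σ_{i,j≥1, i+j-a≥1} (i+j-a) q_i q_j ∂/∂q_{i+j-a}
        + ½ Σ_{i,j≥1} i j q_{i+j+a} ∂²/∂q_i∂q_j. -/
noncomputable def M (a : ℕ) (f : MvPolynomial ℕ ℚ) : MvPolynomial ℕ ℚ :=
  (1 / 2 : ℚ) •
    ((∑ᶠ i : ℕ, ∑ᶠ j : ℕ,
        if 1 ≤ i ∧ 1 ≤ j ∧ 1 ≤ i + j - a then
          ((i + j - a : ℕ) : ℚ) • (X i * X j * pderiv (i + j - a) f)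
        else 0) +
      (∑ᶠ i : ℕ, ∑ᶠ j : ℕ,
        ((i : ℚ) * (j : ℚ)) • (X (i + j + a) * pderiv i (pderiv j f))))

/-!
Λ₁ is the derivation `q_j ↦ j q_{j+1}`, so `[∂_k, Λ₁] = (k - 1) ∂_{k-1}`. Substituting `i = a + 1`,
`j = b + 1` turns the first sum of `M₂` into `Σ (a + b) q_{a+1} q_{b+1} ∂_{a+b}`, and then each sum of
`M₂` commutes with Λ₁ by itself: the terms produced by commuting Λ₁ past the derivatives coincide,
after shifting `a` or `b` by one, with those produced by Λ₁ acting on the coefficients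
`q_{a+1} q_{b+1}` (resp. `q_{a+b+2}`). On a given polynomial all sums are finite, and truncating them
just beyond its variables keeps the shifts free of boundary terms.
-/

open Finset Filter

namespace MvPolynomial

theorem pderiv_pderiv_comm {σ R : Type*} [CommRing R] (i j : σ) (f : MvPolynomial σ R) :
    pderiv i (pderiv j f) = pderiv j (pderiv i f) := by
  classical
  suffices h : ⁅pderiv i, pderiv j⁆ = (0 : Derivation R (MvPolynomial σ R) (MvPolynomial σ R)) by
    rw [← sub_eq_zero, ← Derivation.commutator_apply, h, Derivation.zero_apply]
  ext k
  simp only [Derivation.commutator_apply, pderiv_X, Pi.single_apply]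
  split_ifs <;> simp

theorem derivation_eq_finsum_pderiv_mul {σ R : Type*} [CommSemiring R]
    (D : Derivation R (MvPolynomial σ R) (MvPolynomial σ R)) (f : MvPolynomial σ R) :
    D f = ∑ᶠ i, pderiv i f * D (X i) := by
  classical
  rw [finsum_eq_sum_of_support_subset (s := f.vars) _ fun i hi => ?_]
  · let E : Derivation R (MvPolynomial σ R) (MvPolynomial σ R) := ∑ i ∈ f.vars, D (X i) • pderiv i
    have hE (g) : E g = ∑ i ∈ f.vars, pderiv i g * D (X i) := by
      rw [← Derivation.coeFnAddMonoidHom_apply, map_sum, Finset.sum_apply]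
      simp [Derivation.coeFnAddMonoidHom_apply, mul_comm]
    rw [← hE]
    refine derivation_eq_of_forall_mem_vars fun k hk => ?_
    simp [hE, pderiv_X, Pi.single_apply, hk]
  · by_contra h
    exact hi (by simp [pderiv_eq_zero_of_notMem_vars h])

theorem eventually_pderiv_eq_zero {R : Type*} [CommSemiring R] (f : MvPolynomial ℕ R) :
    ∀ᶠ k in atTop, pderiv k f = 0 := by
  obtain ⟨n, hn⟩ := f.vars.exists_nat_subset_range
  exact eventually_atTop.2 ⟨n, fun k hk =>
    pderiv_eq_zero_of_notMem_vars fun hk' => by simpa using (mem_range.1 (hn hk')).trans_le hk⟩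

end MvPolynomial

theorem Finset.sum_range_shift {M : Type*} [AddCommMonoid M] (g : ℕ → M) (n : ℕ) (h0 : g 0 = 0)
    (hn : g n = 0) : ∑ i ∈ range n, g i = ∑ i ∈ range n, g (i + 1) := by
  have h := sum_range_succ' g n
  rwa [sum_range_succ, hn, h0, add_zero, add_zero] at h

theorem finsum_finsum_eq_sum_range_sum_range {M : Type*} [AddCommMonoid M] (g : ℕ → ℕ → M)
    (n : ℕ) (hg : ∀ a b, n ≤ a ∨ n ≤ b → g a b = 0) :
    ∑ᶠ a, ∑ᶠ b, g a b = ∑ a ∈ range n, ∑ b ∈ range n, g a b := by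
  have h_inner (a : ℕ) : ∑ᶠ b, g a b = ∑ b ∈ range n, g a b :=
    finsum_eq_sum_of_support_subset _ fun b hb => by
      by_contra h
      exact hb (hg a b (.inr (by simpa using h)))
  rw [finsum_congr h_inner]
  refine finsum_eq_sum_of_support_subset _ fun a ha => ?_
  by_contra h
  exact ha (sum_eq_zero fun b _ => hg a b (.inl (by simpa using h)))

noncomputable def lam1Derivation : Derivation ℚ (MvPolynomial ℕ ℚ) (MvPolynomial ℕ ℚ) :=
  mkDerivation ℚ fun j => (j : ℚ) • X (j + 1)

theorem lam1Derivation_X (j : ℕ) : lam1Derivation (X j) = (j : ℚ) • X (j + 1) :=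
  mkDerivation_X _ _ _

theorem Lam1_eq_lam1Derivation (f : MvPolynomial ℕ ℚ) : Lam1 f = lam1Derivation f := by
  rw [derivation_eq_finsum_pderiv_mul, Lam1]
  exact finsum_congr fun j => by rw [lam1Derivation_X, mul_smul_comm, mul_comm]

theorem commutator_pderiv_lam1Derivation (k : ℕ) :
    ⁅(pderiv k : Derivation ℚ (MvPolynomial ℕ ℚ) _), lam1Derivation⁆ =
      ((k - 1 : ℕ) : ℚ) • pderiv (k - 1) := by
  refine derivation_ext fun j => ?_
  rw [Derivation.commutator_apply, lam1Derivation_X, Derivation.smul_apply, pderiv_X, pderiv_X,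
    (pderiv k).map_smul, pderiv_X]
  have h_const : lam1Derivation (Pi.single (M := fun _ => MvPolynomial ℕ ℚ) k 1 j) = 0 := by
    rw [Pi.single_apply]; split_ifs <;> simp
  rw [h_const, sub_zero]
  rcases k with _ | k
  · simp
  · rcases eq_or_ne j k with rfl | hjk
    · simp
    · simp [hjk]

theorem pderiv_lam1Derivation (k : ℕ) (f : MvPolynomial ℕ ℚ) :
    pderiv k (lam1Derivation f) =
      lam1Derivation (pderiv k f) + ((k - 1 : ℕ) : ℚ) • pderiv (k - 1) f := by
  rw [← Derivation.smul_apply, ← commutator_pderiv_lam1Derivation, Derivation.commutator_apply,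
    add_sub_cancel]

/-- The two sums of `M 2`, truncated at `n`, the first one reindexed by `i = a + 1`, `j = b + 1`. -/
noncomputable def cutSum (n : ℕ) (g : MvPolynomial ℕ ℚ) : MvPolynomial ℕ ℚ :=
  ∑ a ∈ range n, ∑ b ∈ range n,
    ((a + b : ℕ) : ℚ) • (X (a + 1) * X (b + 1) * pderiv (a + b) g)

noncomputable def joinSum (n : ℕ) (g : MvPolynomial ℕ ℚ) : MvPolynomial ℕ ℚ :=
  ∑ a ∈ range n, ∑ b ∈ range n, ((a : ℚ) * b) • (X (a + b + 2) * pderiv a (pderiv b g))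

theorem M_two_eq_cutSum_add_joinSum (n : ℕ) (g : MvPolynomial ℕ ℚ)
    (hg : ∀ k ≥ n, pderiv k g = 0) :
    M 2 g = (1 / 2 : ℚ) • (cutSum n g + joinSum n g) := by
  rw [M]
  congr 2
  · rw [finsum_finsum_eq_sum_range_sum_range _ (n + 1) fun i j hij => ?_]
    · rw [cutSum]
      simp only [sum_range_succ', nonpos_iff_eq_zero, one_ne_zero, false_and, and_false, if_false,
        sum_const_zero, add_zero]
      refine sum_congr rfl fun a _ => sum_congr rfl fun b _ => ?_
      rw [show a + 1 + (b + 1) - 2 = a + b by omega]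
      split_ifs with h
      · rfl
      · simp [show a + b = 0 by omega]
    · split_ifs
      · rw [hg _ (by omega), mul_zero, smul_zero]
      · rfl
  · refine finsum_finsum_eq_sum_range_sum_range _ n fun i j hij => ?_
    rcases hij with hi | hj
    · rw [pderiv_pderiv_comm, hg i hi, map_zero, mul_zero, smul_zero]
    · rw [hg j hj, map_zero, mul_zero, smul_zero]

theorem cutSum_lam1Derivation (N : ℕ) (f : MvPolynomial ℕ ℚ) (hf : ∀ k ≥ N, pderiv k f = 0) :
    cutSum (N + 1) (lam1Derivation f) = lam1Derivation (cutSum (N + 1) f) := by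
  -- `(a + b) (a + b - 1) = a (a + b - 1) + b (a + b - 1)`: the two parts are the Leibniz terms
  -- of `Λ₁ (q_{a+1} q_{b+1})`, shifted in `a` and in `b` respectively.
  let t : ℕ → ℕ → ℕ → MvPolynomial ℕ ℚ := fun c a b =>
    ((c : ℚ) * ((a + b - 1 : ℕ) : ℚ)) • (X (a + 1) * X (b + 1) * pderiv (a + b - 1) f)
  have h_fst : ∑ a ∈ range (N + 1), ∑ b ∈ range (N + 1), t a a b =
      ∑ a ∈ range (N + 1), ∑ b ∈ range (N + 1), t (a + 1) (a + 1) b := by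
    refine sum_range_shift (fun a => ∑ b ∈ range (N + 1), t a a b) _ (by simp [t]) ?_
    refine sum_eq_zero fun b _ => ?_
    simp only [t]
    rw [hf _ (by omega), mul_zero, smul_zero]
  have h_snd : ∑ a ∈ range (N + 1), ∑ b ∈ range (N + 1), t b a b =
      ∑ a ∈ range (N + 1), ∑ b ∈ range (N + 1), t (b + 1) a (b + 1) := by
    refine sum_congr rfl fun a _ => sum_range_shift (fun b => t b a b) _ (by simp [t]) ?_
    simp only [t]
    rw [hf _ (by omega), mul_zero, smul_zero]
  rw [← sub_eq_zero, cutSum, cutSum, map_sum, ← sum_sub_distrib]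
  calc _ = ∑ a ∈ range (N + 1), ∑ b ∈ range (N + 1),
        ((t a a b - t (a + 1) (a + 1) b) + (t b a b - t (b + 1) a (b + 1))) := by
        refine sum_congr rfl fun a _ => ?_
        rw [map_sum, ← sum_sub_distrib]
        refine sum_congr rfl fun b _ => ?_
        simp only [t]
        rw [show a + 1 + b - 1 = a + b by omega, show a + (b + 1) - 1 = a + b by omega,
          pderiv_lam1Derivation, Derivation.map_smul, Derivation.leibniz, Derivation.leibniz,
          lam1Derivation_X, lam1Derivation_X]
        simp only [smul_eq_C_mul, smul_eq_mul, map_mul, map_natCast]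
        push_cast
        ring
    _ = 0 := by simp only [sum_add_distrib, sum_sub_distrib, h_fst, h_snd, sub_self, add_zero]

theorem joinSum_lam1Derivation (N : ℕ) (f : MvPolynomial ℕ ℚ) (hf : ∀ k ≥ N, pderiv k f = 0) :
    joinSum (N + 1) (lam1Derivation f) = lam1Derivation (joinSum (N + 1) f) := by
  -- `a b (a + b + 2) = (a + 1) b a + a (b + 1) b`: the two terms of `[∂_a ∂_b, Λ₁]`, shifted.
  let t : ℕ → ℕ → MvPolynomial ℕ ℚ := fun a b =>
    ((a : ℚ) * b * ((a - 1 : ℕ) : ℚ)) • (X (a + b + 2) * pderiv (a - 1) (pderiv b f))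
  have h_fst : ∑ a ∈ range (N + 1), ∑ b ∈ range (N + 1), t a b =
      ∑ a ∈ range (N + 1), ∑ b ∈ range (N + 1), t (a + 1) b := by
    refine sum_range_shift (fun a => ∑ b ∈ range (N + 1), t a b) _ (by simp [t]) ?_
    refine sum_eq_zero fun b _ => ?_
    simp only [t]
    rw [Nat.add_sub_cancel, pderiv_pderiv_comm, hf N le_rfl, map_zero, mul_zero, smul_zero]
  have h_snd : ∑ a ∈ range (N + 1), ∑ b ∈ range (N + 1), t b a =
      ∑ a ∈ range (N + 1), ∑ b ∈ range (N + 1), t (b + 1) a := by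
    refine sum_congr rfl fun a _ => sum_range_shift (fun b => t b a) _ (by simp [t]) ?_
    simp only [t]
    rw [Nat.add_sub_cancel, pderiv_pderiv_comm, hf N le_rfl, map_zero, mul_zero, smul_zero]
  rw [← sub_eq_zero, joinSum, joinSum, map_sum, ← sum_sub_distrib]
  calc _ = ∑ a ∈ range (N + 1), ∑ b ∈ range (N + 1),
        ((t a b - t (a + 1) b) + (t b a - t (b + 1) a)) := by
        refine sum_congr rfl fun a _ => ?_
        rw [map_sum, ← sum_sub_distrib]
        refine sum_congr rfl fun b _ => ?_
        simp only [t]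
        rw [Nat.add_sub_cancel, Nat.add_sub_cancel, show a + 1 + b + 2 = a + b + 2 + 1 by omega,
          show b + 1 + a + 2 = a + b + 2 + 1 by omega, show b + a + 2 = a + b + 2 by omega,
          pderiv_lam1Derivation, map_add, Derivation.map_smul, pderiv_lam1Derivation,
          Derivation.map_smul, Derivation.leibniz, lam1Derivation_X,
          pderiv_pderiv_comm a (b - 1), pderiv_pderiv_comm b a]
        simp only [smul_eq_C_mul, smul_eq_mul, map_mul, map_natCast]
        push_cast
        ring
    _ = 0 := by simp only [sum_add_distrib, sum_sub_distrib, h_fst, h_snd, sub_self, add_zero]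

/-- [M₂, Λ₁] = 0: the operators M₂ and Λ₁ commute on ℚ[q₁, q₂, …]. -/
theorem commutator_M2_Lam1 :
    ∀ f : MvPolynomial ℕ ℚ, M 2 (Lam1 f) - Lam1 (M 2 f) = 0 := by
  intro f
  obtain ⟨N, hf⟩ := eventually_atTop.1 (eventually_pderiv_eq_zero f)
  have hΛf : ∀ k ≥ N + 1, pderiv k (lam1Derivation f) = 0 := fun k hk => by
    rw [pderiv_lam1Derivation, hf k (by omega), hf (k - 1) (by omega), map_zero, smul_zero,
      add_zero]
  rw [Lam1_eq_lam1Derivation, Lam1_eq_lam1Derivation, M_two_eq_cutSum_add_joinSum _ _ hΛf,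
    M_two_eq_cutSum_add_joinSum (N + 1) f fun k hk => hf k (by omega),
    cutSum_lam1Derivation N f hf, joinSum_lam1Derivation N f hf, Derivation.map_smul, map_add,
    sub_self]
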